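/- Let ρ > 0, θ > 0, 0 ≤ s < 1, and let h, E′ be real numbers with h > θ, E′ > 0, and hE′ > θ(1+E′). Then Δ := ρh² − ρθh(2+s) + ρθ²(1+E′) > 0. (Here s plays the role of ‖v‖² for a velocity with ‖v‖ < 1, and in the application h = 1+e(θ)+θ and E′ = e′(θ).) -/
import Mathlib


/-- Positivity of `Δ = ρh² − ρθh(2+s) + ρθ²(1+E′)` under the relativistic causality
condition `e′(θ) > 0`, `h e′(θ) > θ(1+e′(θ))` (with `E′` standing for `e′(θ)`),
`h > θ`, and `0 ≤ s < 1` (where `s` plays the role of `‖v‖²`). -/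
theorem stmt4 (ρ θ s h E' : ℝ) (hρ : 0 < ρ) (hθ : 0 < θ) (hs0 : 0 ≤ s) (hs1 : s < 1)
    (hhθ : θ < h) (hE : 0 < E') (hcaus : θ * (1 + E') < h * E') :
    0 < ρ * h ^ 2 - ρ * θ * h * (2 + s) + ρ * θ ^ 2 * (1 + E') := by
  have key : (h - θ) * (1 + E') > h := by nlinarith
  have hd : 0 < h - θ := sub_pos.mpr hhθ
  have hh : 0 < h := hθ.trans hhθ
  have h2 : h ^ 2 - θ * h * (2 + s) + θ ^ 2 * (1 + E') > 0 := by
    nlinarith [hd, mul_lt_mul_of_pos_left key (mul_pos hθ hθ),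
      mul_nonneg hh.le (sq_nonneg (2*h - (3+s)*θ)),
      mul_nonneg hh.le (mul_nonneg (mul_nonneg (sub_nonneg.mpr hs1.le)
        (by linarith : (0:ℝ) ≤ 3+s)) (mul_pos hθ hθ).le)]
  nlinarith [mul_pos hρ h2]
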